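/- arXiv:1610.07067 — 3 statements merged into one kernel-verified Lean document; each statement's English description precedes it below -/
import Mathlib

section
/- There exist constants c₁ > 0 and d₀ > 0 depending only on δ and p such that the following holds. In the standing setup (see context) with d ≥ d₀, one has h_P(ν_P(a)) ≤ c₁ d^{−1/(1−p)} and h_P(ν_P(b)) ≤ c₁ d^{−1/(1−p)}. -/
open MeasureTheory Set
open scoped RealInnerProductSpace ENNReal NNReal Classical

noncomputable section

abbrev E (n : ℕ) : Type := EuclideanSpace ℝ (Fin n)

/-- The support function of a set. -/
def suppFn {n : ℕ} (K : Set (E n)) (u : E n) : ℝ :=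
  sSup ((fun x => ⟪x, u⟫) '' K)

/-- `u` is an exterior unit normal of `K` at `x`. -/
def IsOuterNormalAt {n : ℕ} (K : Set (E n)) (u x : E n) : Prop :=
  ‖u‖ = 1 ∧ ∀ y ∈ K, ⟪y, u⟫ ≤ ⟪x, u⟫

/-- A choice of Gauss map (exterior unit normal) for `K`. -/
def gaussMap {n : ℕ} (K : Set (E n)) (x : E n) : E n :=
  if h : ∃ u, IsOuterNormalAt K u x then h.choose else 0

/-- The surface area measure of a compact convex set, extended to the degenerate case:
if `K` has nonempty interior it is `S_K(ω) = ℋ^{n-1}(ν_K^{-1}(ω))`; if `K` lies in a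
hyperplane orthogonal to a unit vector `v` it is `ℋ^{n-1}(K)⋅(δ_v + δ_{-v})` (which is `0`
when `dim K ≤ n-2`). -/
def surfMeasure {n : ℕ} (K : Set (E n)) : Measure (E n) :=
  if (interior K).Nonempty then
    Measure.map (gaussMap K) ((μH[(n : ℝ) - 1]).restrict (frontier K))
  else if h : ∃ v : E n, ‖v‖ = 1 ∧ ∀ x ∈ K, ∀ y ∈ K, ⟪x - y, v⟫ = 0 then
    (μH[(n : ℝ) - 1] K) • (Measure.dirac h.choose + Measure.dirac (-h.choose))
  else 0

/-- The `L_p` surface area measure `dS_{K,p} = h_K^{1-p} dS_K`. -/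
def lpSurfMeasure {n : ℕ} (p : ℝ) (K : Set (E n)) : Measure (E n) :=
  (surfMeasure K).withDensity (fun u => ENNReal.ofReal (suppFn K u ^ (1 - p)))

/-- A convex body: a compact convex set with nonempty interior. -/
def IsConvexBody {n : ℕ} (K : Set (E n)) : Prop :=
  Convex ℝ K ∧ IsCompact K ∧ (interior K).Nonempty

/-- The support of a Borel measure. -/
def msupport {n : ℕ} (μ : Measure (E n)) : Set (E n) :=
  {x | ∀ U : Set (E n), IsOpen U → x ∈ U → 0 < μ U}

/-- The unit sphere `S^{n-1}` in `ℝⁿ`. -/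
def unitSphere (n : ℕ) : Set (E n) := Metric.sphere 0 1

/-- The spherical cap `Ω(v,t) = {u ∈ S^{n-1} : ⟨u,v⟩ > t}`. -/
def hemi {n : ℕ} (v : E n) (t : ℝ) : Set (E n) :=
  {u | u ∈ unitSphere n ∧ t < ⟪u, v⟫}



/-- The standing setup of Section 3 of the paper. -/
def Setup (p δ : ℝ) (P : Set (E 2)) (d : ℝ) (y z v w a b νa νb : E 2) : Prop :=
  Convex ℝ P ∧ IsCompact P ∧ (0:E 2) ∈ interior P ∧
  lpSurfMeasure p P Set.univ < ENNReal.ofReal (1/δ) ∧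
  d = Metric.diam P ∧
  y ∈ P ∧ z ∈ P ∧ ‖z - y‖ = d ∧ ‖y‖ ≤ ‖z‖ ∧
  v = d⁻¹ • (z - y) ∧ ‖w‖ = 1 ∧ ⟪v, w⟫ = 0 ∧
  a ∈ frontier P ∧ b ∈ frontier P ∧ 0 < ⟪a - b, w⟫ ∧
  ⟪a, v⟫ = d/4 ∧ ⟪b, v⟫ = d/4 ∧
  IsOuterNormalAt P νa a ∧ IsOuterNormalAt P νb b

/-!
Sweep the levels `t ∈ (d/4, d/2)` of `⟪·, v⟫`. On each level, the boundary point `x` of `P`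
that is extreme in direction `w` has an exterior normal lying in the cone spanned by `ν_P(a)` and
`v`, because `x` lies beyond `a` in direction `v` and `b` lies below `a` in direction `w`.
Testing this normal at `a` gives `h_P(ν(x)) ≥ min (h_P(ν_P(a))) (d/4)`. These points project
onto an interval of length `d/4`, so
`1/δ > ∫ h_P^{1-p} dS_P ≥ min (h_P(ν_P(a))) (d/4) ^ (1-p) * d/4`,
and for `d ≥ 4/δ` the minimum must be `h_P(ν_P(a))`, which is the claimed bound.
Replacing `w` by `-w` swaps the roles of `a` and `b`.

The integral is taken over `∂P` against `ℋ¹` through the Gauss map, which is continuous away from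
the corners of `P`; in the plane these form a countable set, hence an `ℋ¹`-null one.
-/

open Filter Topology

section SupportFunction

variable {n : ℕ} {K : Set (E n)}

lemma le_suppFn (hK : IsCompact K) {x : E n} (hx : x ∈ K) (u : E n) : ⟪x, u⟫ ≤ suppFn K u :=
  le_csSup (hK.image (continuous_id.inner continuous_const)).bddAbove ⟨x, hx, rfl⟩

lemma IsOuterNormalAt.suppFn_eq (hK : IsCompact K) {u x : E n} (h : IsOuterNormalAt K u x)
    (hx : x ∈ K) : suppFn K u = ⟪x, u⟫ :=
  le_antisymm (csSup_le ⟨_, x, hx, rfl⟩ (by rintro _ ⟨y, hy, rfl⟩; exact h.2 y hy))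
    (le_suppFn hK hx u)

lemma continuous_suppFn (hK : IsCompact K) : Continuous (suppFn K) :=
  hK.continuous_sSup (by fun_prop)

lemma measurable_ofReal_suppFn_rpow (hK : IsCompact K) (q : ℝ) :
    Measurable fun u => ENNReal.ofReal (suppFn K u ^ q) :=
  ((continuous_suppFn hK).measurable.pow_const q).ennreal_ofReal

lemma IsOuterNormalAt.inner_lt_of_mem_interior {u x y : E n} (h : IsOuterNormalAt K u x)
    (hy : y ∈ interior K) : ⟪y, u⟫ < ⟪x, u⟫ := by
  obtain ⟨ε, hε, hball⟩ := Metric.mem_nhds_iff.1 (mem_interior_iff_mem_nhds.1 hy)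
  have hmem : y + (ε / 2) • u ∈ K := hball <| by
    rw [Metric.mem_ball, dist_self_add_left, norm_smul, h.1, Real.norm_of_nonneg (by positivity)]
    linarith
  have := h.2 _ hmem
  rw [inner_add_left, real_inner_smul_left, real_inner_self_eq_norm_sq, h.1] at this
  linarith

lemma IsOuterNormalAt.inner_pos (h0 : (0 : E n) ∈ interior K) {u x : E n}
    (h : IsOuterNormalAt K u x) : 0 < ⟪x, u⟫ := by
  simpa using h.inner_lt_of_mem_interior h0

lemma exists_isOuterNormalAt (hK : Convex ℝ K) (hint : (interior K).Nonempty) {x : E n}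
    (hx : x ∈ frontier K) : ∃ u, IsOuterNormalAt K u x := by
  obtain ⟨f, hf⟩ := geometric_hahn_banach_open_point hK.interior isOpen_interior hx.2
  set u := (InnerProductSpace.toDual ℝ (E n)).symm f
  have hfu : ∀ y, f y = ⟪y, u⟫ := fun y => by
    rw [real_inner_comm, InnerProductSpace.toDual_symm_apply]
  have hle : ∀ y ∈ K, f y ≤ f x := fun y hy => by
    have hy' : y ∈ closure (interior K) := by
      rw [hK.closure_interior_eq_closure_of_nonempty_interior hint]
      exact subset_closure hy
    exact closure_minimal (fun a ha => (hf a ha).le)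
      (isClosed_le f.continuous continuous_const) hy'
  have hu : u ≠ 0 := by
    rintro hu
    obtain ⟨y, hy⟩ := hint
    simpa [hfu, hu] using hf y hy
  refine ⟨‖u‖⁻¹ • u, norm_smul_inv_norm hu, fun y hy => ?_⟩
  simp only [real_inner_smul_right, ← hfu]
  exact mul_le_mul_of_nonneg_left (hle y hy) (by positivity)

lemma isOuterNormalAt_gaussMap (hK : Convex ℝ K) (hint : (interior K).Nonempty) {x : E n}
    (hx : x ∈ frontier K) : IsOuterNormalAt K (gaussMap K x) x := by
  have h := exists_isOuterNormalAt hK hint hx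
  rw [gaussMap, dif_pos h]
  exact h.choose_spec

lemma isClosed_setOf_isOuterNormalAt (K : Set (E n)) :
    IsClosed {q : E n × E n | IsOuterNormalAt K q.2 q.1} := by
  simp only [IsOuterNormalAt, ofPred_and, ofPred_forall]
  exact (isClosed_eq (by fun_prop) continuous_const).inter
    (isClosed_biInter fun y _ => isClosed_le (by fun_prop) (by fun_prop))

def cornerSet (K : Set (E n)) : Set (E n) :=
  {x ∈ frontier K | ∃ u u', IsOuterNormalAt K u x ∧ IsOuterNormalAt K u' x ∧ u ≠ u'}

lemma continuousOn_gaussMap (hK : Convex ℝ K) (hint : (interior K).Nonempty) :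
    ContinuousOn (gaussMap K) (frontier K \ cornerSet K) := by
  intro x hx
  have hnormal : ∀ y ∈ frontier K, IsOuterNormalAt K (gaussMap K y) y :=
    fun y hy => isOuterNormalAt_gaussMap hK hint hy
  refine (isCompact_sphere (0 : E n) 1).tendsto_nhds_of_unique_mapClusterPt ?_
    fun u _ hu => ?_
  · filter_upwards [self_mem_nhdsWithin] with y hy
    rw [mem_sphere_zero_iff_norm]
    exact (hnormal y hy.1).1
  obtain ⟨ψ, hgψ, hψ⟩ := hu.exists_seq_tendsto
  have hgraph : Tendsto (fun k => (ψ k, gaussMap K (ψ k))) atTop (𝓝 (x, u)) :=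
    (hψ.mono_right nhdsWithin_le_nhds).prodMk_nhds hgψ
  have hev : ∀ᶠ k in atTop,
      (ψ k, gaussMap K (ψ k)) ∈ {q : E n × E n | IsOuterNormalAt K q.2 q.1} :=
    (hψ.eventually self_mem_nhdsWithin).mono fun k hk => hnormal (ψ k) hk.1
  have hlim : (x, u) ∈ {q : E n × E n | IsOuterNormalAt K q.2 q.1} :=
    (isClosed_setOf_isOuterNormalAt K).mem_of_tendsto hgraph hev
  by_contra hne
  exact hx.2 ⟨hx.1, u, gaussMap K x, hlim, hnormal x hx.1, hne⟩

def normalCone (K : Set (E n)) (x : E n) : Set (E n) :=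
  {q | ∀ y ∈ K, ⟪y, q⟫ ≤ ⟪x, q⟫}

lemma smul_add_smul_mem_normalCone {x u u' : E n} (hu : IsOuterNormalAt K u x)
    (hu' : IsOuterNormalAt K u' x) {s t : ℝ} (hs : 0 ≤ s) (ht : 0 ≤ t) :
    s • u + t • u' ∈ normalCone K x := fun y hy => by
  simp only [inner_add_right, real_inner_smul_right]
  gcongr
  exacts [hu.2 y hy, hu'.2 y hy]

lemma eq_of_mem_interior_normalCone {x x' q : E n} (hx : x ∈ K) (hx' : x' ∈ K)
    (hq : q ∈ interior (normalCone K x)) (hq' : q ∈ interior (normalCone K x')) : x = x' := by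
  have hzero : ∀ᶠ q' in 𝓝 q, ⟪x - x', q'⟫ = 0 := by
    filter_upwards [mem_interior_iff_mem_nhds.1 hq, mem_interior_iff_mem_nhds.1 hq']
      with q' h h'
    rw [inner_sub_left]
    linarith [h x' hx', h' x hx]
  have hline : Tendsto (fun ε : ℝ => q + ε • (x - x')) (𝓝[≠] 0) (𝓝 q) :=
    (Continuous.tendsto' (by fun_prop) 0 q (by simp)).mono_left nhdsWithin_le_nhds
  obtain ⟨ε, hε, hε0⟩ := ((hline.eventually hzero).and self_mem_nhdsWithin).exists
  rw [inner_add_right, hzero.self_of_nhds, real_inner_smul_right, zero_add,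
    real_inner_self_eq_norm_sq] at hε
  simp only [mul_eq_zero, pow_eq_zero_iff two_ne_zero, norm_eq_zero, sub_eq_zero] at hε
  exact hε.resolve_left hε0

lemma le_inner_of_eq_smul_add_smul {a u ν v : E n} {s t m : ℝ} (hu : ‖u‖ = 1) (hν : ‖ν‖ = 1)
    (hv : ‖v‖ = 1) (hs : 0 ≤ s) (ht : 0 ≤ t) (huv : u = s • ν + t • v) (hm : 0 ≤ m)
    (hmν : m ≤ ⟪a, ν⟫) (hmv : m ≤ ⟪a, v⟫) : m ≤ ⟪a, u⟫ := by
  have hst : 1 ≤ s + t := by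
    have := norm_add_le (s • ν) (t • v)
    rwa [← huv, hu, norm_smul, norm_smul, hν, hv, Real.norm_of_nonneg hs,
      Real.norm_of_nonneg ht, mul_one, mul_one] at this
  rw [huv, inner_add_right, real_inner_smul_right, real_inner_smul_right]
  nlinarith [mul_le_mul_of_nonneg_left hmν hs, mul_le_mul_of_nonneg_left hmv ht]

lemma norm_sub_sq_le_two_mul_inner_sub {y z : E n} (h : ‖y‖ ≤ ‖z‖) :
    ‖z - y‖ ^ 2 ≤ 2 * ⟪z, z - y⟫ := by
  rw [norm_sub_sq_real, inner_sub_right, real_inner_self_eq_norm_sq]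
  nlinarith [norm_nonneg y]

lemma mul_ofReal_sub_le_setLIntegral {S : Set (E n)} {g : E n → ℝ≥0∞}
    (hg : AEMeasurable g (μH[1].restrict S)) {v : E n} (hv : ‖v‖ = 1) {α β : ℝ} {c : ℝ≥0∞}
    (h : ∀ t ∈ Ioo α β, ∃ x ∈ S, ⟪x, v⟫ = t ∧ c ≤ g x) :
    c * ENNReal.ofReal (β - α) ≤ ∫⁻ x in S, g x ∂μH[1] := by
  have hproj : LipschitzWith 1 (⟪·, v⟫) := LipschitzWith.of_dist_le_mul fun x x' => by
    rw [Real.dist_eq, dist_eq_norm, ← inner_sub_left, NNReal.coe_one, one_mul]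
    simpa [hv] using abs_real_inner_le_norm (x - x') v
  set T := {x | c ≤ g x}
  have hT : ENNReal.ofReal (β - α) ≤ μH[1] (T ∩ S) :=
    calc ENNReal.ofReal (β - α) = μH[1] (Ioo α β) := by
          rw [hausdorffMeasure_real, Real.volume_Ioo]
      _ ≤ μH[1] ((⟪·, v⟫) '' (T ∩ S)) := measure_mono fun t ht => by
          obtain ⟨x, hxS, hxt, hcx⟩ := h t ht
          exact ⟨x, ⟨hcx, hxS⟩, hxt⟩
      _ ≤ μH[1] (T ∩ S) := by
          simpa using hproj.hausdorffMeasure_image_le zero_le_one (T ∩ S)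
  calc c * ENNReal.ofReal (β - α) ≤ c * μH[1].restrict S T :=
        mul_le_mul_right (hT.trans (Measure.le_restrict_apply S T)) c
    _ ≤ ∫⁻ x in S, g x ∂μH[1] := mul_meas_ge_le_lintegral₀ hg c

end SupportFunction

section Plane

variable {K : Set (E 2)}

lemma interior_normalCone_nonempty (h0 : (0 : E 2) ∈ interior K) {x u u' : E 2}
    (hu : IsOuterNormalAt K u x) (hu' : IsOuterNormalAt K u' x) (hne : u ≠ u') :
    (interior (normalCone K x)).Nonempty := by
  have hindep : LinearIndependent ℝ ![u, u'] := by
    rw [LinearIndependent.pair_iff' (norm_ne_zero_iff.1 (by simp [hu.1]))]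
    rintro c rfl
    have hc : |c| = 1 := by simpa [norm_smul, hu.1] using hu'.1
    rcases abs_eq_abs.1 (hc.trans abs_one.symm) with rfl | rfl
    · exact hne (one_smul ℝ u).symm
    · have := hu'.inner_pos h0
      rw [neg_one_smul, inner_neg_right] at this
      linarith [hu.inner_pos h0]
  let b := basisOfLinearIndependentOfCardEqFinrank hindep (by simp)
  let L := b.equivFun.symm.toContinuousLinearEquiv
  have hL : ∀ f, L f = f 0 • u + f 1 • u' := fun f => by
    simp [L, b, Module.Basis.equivFun_symm_apply, Fin.sum_univ_two]
  set V : Set (Fin 2 → ℝ) := {f | 0 < f 0 ∧ 0 < f 1}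
  have hV : IsOpen V :=
    (isOpen_lt continuous_const (continuous_apply 0)).inter
      (isOpen_lt continuous_const (continuous_apply 1))
  have hsub : L '' V ⊆ normalCone K x := by
    rintro _ ⟨f, hf, rfl⟩
    rw [hL]
    exact smul_add_smul_mem_normalCone hu hu' hf.1.le hf.2.le
  exact ⟨L fun _ => 1, interior_maximal hsub (L.isOpenMap V hV)
    (mem_image_of_mem L ⟨one_pos, one_pos⟩)⟩

lemma countable_cornerSet (hK : IsClosed K) (h0 : (0 : E 2) ∈ interior K) :
    (cornerSet K).Countable := by
  refine Set.PairwiseDisjoint.countable_of_isOpen (s := fun x => interior (normalCone K x))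
    (fun x hx x' hx' hne => Set.disjoint_left.2 fun q hq hq' => hne ?_)
    (fun _ _ => isOpen_interior) fun x ⟨_, u, u', hu, hu', hne⟩ =>
      interior_normalCone_nonempty h0 hu hu' hne
  exact eq_of_mem_interior_normalCone (hK.frontier_subset hx.1) (hK.frontier_subset hx'.1) hq hq'

lemma aemeasurable_gaussMap (hK : Convex ℝ K) (hKc : IsClosed K) (h0 : (0 : E 2) ∈ interior K) :
    AEMeasurable (gaussMap K) (μH[1].restrict (frontier K)) := by
  have hC := countable_cornerSet hKc h0
  have hCnull : (μH[1] : Measure (E 2)) (cornerSet K) = 0 := by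
    simpa using hausdorffMeasure_of_dimH_lt (d := 1) (by rw [dimH_countable hC]; norm_num)
  rw [← sdiff_union_of_subset (fun x (hx : x ∈ cornerSet K) => hx.1), aemeasurable_union_iff,
    Measure.restrict_eq_zero.2 hCnull]
  exact ⟨(continuousOn_gaussMap hK ⟨0, h0⟩).aemeasurable
    (isClosed_frontier.measurableSet.diff hC.measurableSet), aemeasurable_zero_measure⟩

lemma lpSurfMeasure_univ_eq_setLIntegral (hK : Convex ℝ K) (hKc : IsCompact K)
    (h0 : (0 : E 2) ∈ interior K) (p : ℝ) :
    lpSurfMeasure p K univ =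
      ∫⁻ x in frontier K, ENNReal.ofReal (suppFn K (gaussMap K x) ^ (1 - p)) ∂μH[1] := by
  rw [lpSurfMeasure, surfMeasure, if_pos ⟨0, h0⟩, withDensity_apply _ MeasurableSet.univ,
    setLIntegral_univ, show ((2 : ℕ) : ℝ) - 1 = 1 by norm_num,
    lintegral_map' (measurable_ofReal_suppFn_rpow hKc _).aemeasurable
      (aemeasurable_gaussMap hK hKc.isClosed h0)]

section Frame

variable {v w : E 2} (hv : ‖v‖ = 1) (hw : ‖w‖ = 1) (hvw : ⟪v, w⟫ = 0)
include hv hw hvw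

lemma eq_inner_smul_add_inner_smul (r : E 2) : r = ⟪r, v⟫ • v + ⟪r, w⟫ • w := by
  have hon : Orthonormal ℝ ![v, w] := by
    rw [orthonormal_iff_ite]
    intro i j
    fin_cases i <;> fin_cases j <;> simp [hv, hw, hvw, real_inner_comm v w]
  let b := (basisOfOrthonormalOfCardEqFinrank hon (by simp)).toOrthonormalBasis
    (by simpa using hon)
  simpa [b, Fin.sum_univ_two, real_inner_comm] using (b.sum_repr' r).symm

lemma real_inner_eq_inner_mul_inner_add (r s : E 2) :
    ⟪r, s⟫ = ⟪r, v⟫ * ⟪s, v⟫ + ⟪r, w⟫ * ⟪s, w⟫ := by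
  conv_lhs => rw [eq_inner_smul_add_inner_smul hv hw hvw s]
  simp only [inner_add_right, real_inner_smul_right]
  ring

lemma exists_nonneg_eq_smul_add_smul {r u ν : E 2} (hr : 0 < ⟪r, v⟫) (hru : 0 ≤ ⟪r, u⟫)
    (hrν : ⟪r, ν⟫ ≤ 0) (huw : 0 ≤ ⟪u, w⟫) (hνw : 0 < ⟪ν, w⟫) :
    ∃ s t : ℝ, 0 ≤ s ∧ 0 ≤ t ∧ u = s • ν + t • v := by
  have hu := eq_inner_smul_add_inner_smul hv hw hvw u
  have hν := eq_inner_smul_add_inner_smul hv hw hvw ν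
  rw [real_inner_eq_inner_mul_inner_add hv hw hvw] at hru hrν
  set det := ⟪u, v⟫ * ⟪ν, w⟫ - ⟪u, w⟫ * ⟪ν, v⟫
  have hdet : 0 ≤ det := by
    have key : ⟪r, v⟫ * det = (⟪r, v⟫ * ⟪u, v⟫ + ⟪r, w⟫ * ⟪u, w⟫) * ⟪ν, w⟫
        - (⟪r, v⟫ * ⟪ν, v⟫ + ⟪r, w⟫ * ⟪ν, w⟫) * ⟪u, w⟫ := by ring
    refine (mul_nonneg_iff_of_pos_left hr).1 ?_
    rw [key]
    linarith [mul_nonneg hru hνw.le, mul_nonneg (neg_nonneg.2 hrν) huw]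
  refine ⟨⟪u, w⟫ / ⟪ν, w⟫, det / ⟪ν, w⟫, by positivity, by positivity, ?_⟩
  calc u = ⟪u, v⟫ • v + ⟪u, w⟫ • w := hu
    _ = (⟪u, w⟫ / ⟪ν, w⟫) • (⟪ν, v⟫ • v + ⟪ν, w⟫ • w) + (det / ⟪ν, w⟫) • v := by
      match_scalars <;> field_simp
      ring
    _ = _ := by rw [← hν]

lemma exists_frontier_inner_eq_forall_inner_pos (hK : IsCompact K) {p : E 2}
    (hp : p ∈ interior K) :
    ∃ x ∈ frontier K, ⟪x, v⟫ = ⟪p, v⟫ ∧ ∀ u, IsOuterNormalAt K u x → 0 < ⟪u, w⟫ := by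
  set S := K ∩ {x | ⟪x, v⟫ = ⟪p, v⟫}
  have hS : IsCompact S := hK.inter_right (isClosed_eq (by fun_prop) continuous_const)
  obtain ⟨x, ⟨hxK, hxv : ⟪x, v⟫ = ⟪p, v⟫⟩, hmax⟩ := hS.exists_isMaxOn
    ⟨p, interior_subset hp, rfl⟩ (by fun_prop : Continuous (⟪·, w⟫)).continuousOn
  have hwv : ⟪w, v⟫ = 0 := by rw [real_inner_comm, hvw]
  have hww : ⟪w, w⟫ = 1 := by rw [real_inner_self_eq_norm_sq, hw, one_pow]
  have hnot : x ∉ interior K := fun hx => by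
    have hline : Tendsto (fun ε : ℝ => x + ε • w) (𝓝[>] 0) (𝓝 x) :=
      (Continuous.tendsto' (by fun_prop) 0 x (by simp)).mono_left nhdsWithin_le_nhds
    obtain ⟨ε, hεK, hε⟩ :=
      ((hline.eventually (mem_interior_iff_mem_nhds.1 hx)).and self_mem_nhdsWithin).exists
    have : ⟪x + ε • w, w⟫ ≤ ⟪x, w⟫ :=
      hmax ⟨hεK, by simp [inner_add_left, real_inner_smul_left, hwv, hxv]⟩
    rw [inner_add_left, real_inner_smul_left, hww] at this
    linarith
  refine ⟨x, ⟨subset_closure hxK, hnot⟩, hxv, fun u hu => ?_⟩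
  have hdecomp : p - x = ⟪p - x, w⟫ • w := by
    simpa [inner_sub_left, hxv] using eq_inner_smul_add_inner_smul hv hw hvw (p - x)
  have hle : ⟪p - x, w⟫ ≤ 0 := by
    rw [inner_sub_left, sub_nonpos]
    exact hmax ⟨interior_subset hp, rfl⟩
  have hlt : ⟪p - x, u⟫ < 0 := by
    rw [inner_sub_left, sub_neg]
    exact hu.inner_lt_of_mem_interior hp
  rw [hdecomp, real_inner_smul_left, real_inner_comm u w] at hlt
  by_contra! huw
  linarith [mul_nonneg_of_nonpos_of_nonpos hle huw]

lemma exists_frontier_min_le_suppFn_gaussMap (hK : Convex ℝ K) (hKc : IsCompact K)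
    (h0 : (0 : E 2) ∈ interior K) {a b z ν : E 2} {c t : ℝ} (ha : a ∈ K) (hb : b ∈ K)
    (hz : z ∈ K) (hav : ⟪a, v⟫ = c) (hbv : ⟪b, v⟫ = c) (hab : 0 < ⟪a - b, w⟫)
    (hν : IsOuterNormalAt K ν a) (hc : 0 < c) (hct : c < t) (htz : t < ⟪z, v⟫) :
    ∃ x ∈ frontier K, ⟪x, v⟫ = t ∧ min ⟪a, ν⟫ c ≤ suppFn K (gaussMap K x) := by
  have hzv : 0 < ⟪z, v⟫ := by linarith
  have hp : (t / ⟪z, v⟫) • z ∈ interior K := by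
    simpa using hK.combo_interior_closure_mem_interior h0 (subset_closure hz)
      (a := 1 - t / ⟪z, v⟫) (by rw [sub_pos, div_lt_one hzv]; exact htz)
      (div_pos (hc.trans hct) hzv).le (by ring)
  obtain ⟨x, hx, hxv, hxw⟩ := exists_frontier_inner_eq_forall_inner_pos hv hw hvw hKc hp
  rw [real_inner_smul_left, div_mul_cancel₀ _ hzv.ne'] at hxv
  have hxK : x ∈ K := hKc.isClosed.frontier_subset hx
  have hu := isOuterNormalAt_gaussMap hK ⟨0, h0⟩ hx
  -- `ν ≠ v` since `x` lies beyond `a` in direction `v`, and `ν ≠ -v` since `⟪a, ν⟫ > 0`.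
  have hνw : 0 < ⟪ν, w⟫ := by
    have hba : ⟪b - a, ν⟫ ≤ 0 := by rw [inner_sub_left]; linarith [hν.2 b hb]
    have hxa : ⟪x - a, ν⟫ ≤ 0 := by rw [inner_sub_left]; linarith [hν.2 x hxK]
    have hpos := hν.inner_pos h0
    rw [real_inner_eq_inner_mul_inner_add hv hw hvw] at hba hxa hpos
    rw [inner_sub_left] at hab
    simp only [inner_sub_left, hav, hbv, hxv] at hba hxa hpos
    by_contra! hle
    have hν2 : ⟪ν, w⟫ = 0 := le_antisymm hle (by nlinarith)
    rw [hν2, mul_zero, add_zero] at hxa hpos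
    linarith [mul_pos (sub_pos.2 hct) (pos_of_mul_pos_right hpos hc.le)]
  obtain ⟨s, s', hs, hs', hdecomp⟩ := exists_nonneg_eq_smul_add_smul hv hw hvw (r := x - a)
    (by rw [inner_sub_left]; linarith) (by rw [inner_sub_left]; linarith [hu.2 a ha])
    (by rw [inner_sub_left]; linarith [hν.2 x hxK]) (hxw _ hu).le hνw
  refine ⟨x, hx, hxv, ?_⟩
  rw [hu.suppFn_eq hKc hxK]
  calc min ⟪a, ν⟫ c ≤ ⟪a, gaussMap K x⟫ :=
        le_inner_of_eq_smul_add_smul hu.1 hν.1 hv hs hs' hdecomp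
          (le_min (hν.inner_pos h0).le hc.le) (min_le_left _ _) (hav ▸ min_le_right _ _)
    _ ≤ ⟪x, gaussMap K x⟫ := hu.2 a ha

end Frame

end Plane

lemma le_mul_rpow_of_min_rpow_mul_lt {p δ d h : ℝ} (hp : p < 1) (hδ : 0 < δ) (hδ1 : δ ≤ 1)
    (hd : 4 / δ ≤ d) (hh : 0 < h) (H : min h (d / 4) ^ (1 - p) * (d / 4) < 1 / δ) :
    h ≤ (4 / δ) ^ (1 / (1 - p)) * d ^ (-1 / (1 - p)) := by
  have hq : 0 < 1 - p := by linarith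
  have hd4 : 1 / δ ≤ d / 4 := by linarith [show 4 / δ = 4 * (1 / δ) by ring]
  have hd0 : 0 < d := by linarith [one_div_pos.2 hδ]
  have hmin : min h (d / 4) = h := by
    refine min_eq_left (le_of_not_ge fun hge => ?_)
    rw [min_eq_right hge] at H
    have := Real.one_le_rpow ((one_le_one_div hδ hδ1).trans hd4) hq.le
    nlinarith
  rw [hmin, lt_div_iff₀ hδ] at H
  have H' : h ^ (1 - p) ≤ 4 / (δ * d) := by
    rw [le_div_iff₀ (by positivity)]
    linarith
  calc h = (h ^ (1 - p)) ^ (1 / (1 - p)) := by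
        rw [← Real.rpow_mul hh.le, mul_one_div_cancel hq.ne', Real.rpow_one]
    _ ≤ (4 / (δ * d)) ^ (1 / (1 - p)) := Real.rpow_le_rpow (by positivity) H' (by positivity)
    _ = (4 / δ) ^ (1 / (1 - p)) * d ^ (-1 / (1 - p)) := by
        rw [← div_div, div_eq_mul_inv _ d, Real.mul_rpow (by positivity) (by positivity),
          Real.inv_rpow hd0.le, ← Real.rpow_neg hd0.le, neg_div]

namespace Setup

variable {p δ d : ℝ} {P : Set (E 2)} {y z v w a b νa νb : E 2}

lemma swap (hS : Setup p δ P d y z v w a b νa νb) : Setup p δ P d y z v (-w) b a νb νa := by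
  obtain ⟨h₁, h₂, h₃, h₄, h₅, h₆, h₇, h₈, h₉, h₁₀, hw, hvw, ha, hb, hab, hav, hbv, hνa, hνb⟩ := hS
  refine ⟨h₁, h₂, h₃, h₄, h₅, h₆, h₇, h₈, h₉, h₁₀, by rwa [norm_neg],
    by rw [inner_neg_right, hvw, neg_zero], hb, ha, ?_, hbv, hav, hνb, hνa⟩
  rwa [inner_neg_right, ← inner_neg_left, neg_sub]

lemma suppFn_le (hS : Setup p δ P d y z v w a b νa νb) (hp : p < 1) (hδ : 0 < δ)
    (hδ1 : δ ≤ 1) (hd : 4 / δ ≤ d) :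
    suppFn P νa ≤ (4 / δ) ^ (1 / (1 - p)) * d ^ (-1 / (1 - p)) := by
  obtain ⟨hP, hPc, h0, hlp, -, -, hz, hzy, hyz, rfl, hw, hvw, haF, hbF, hab, hav, hbv, hνa, -⟩ :=
    hS
  have hd0 : 0 < d := lt_of_lt_of_le (by positivity) hd
  have hv : ‖d⁻¹ • (z - y)‖ = 1 := by
    rw [norm_smul, hzy, norm_inv, Real.norm_of_nonneg hd0.le, inv_mul_cancel₀ hd0.ne']
  have hzv : d / 2 ≤ ⟪z, d⁻¹ • (z - y)⟫ := by
    have := norm_sub_sq_le_two_mul_inner_sub hyz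
    rw [hzy] at this
    rw [real_inner_smul_right, le_inv_mul_iff₀ hd0]
    nlinarith
  have ha := hPc.isClosed.frontier_subset haF
  have hb := hPc.isClosed.frontier_subset hbF
  have hm : 0 ≤ min ⟪a, νa⟫ (d / 4) := le_min (hνa.inner_pos h0).le (by positivity)
  have hlevel : ∀ t ∈ Ioo (d / 4) (d / 2), ∃ x ∈ frontier P, ⟪x, d⁻¹ • (z - y)⟫ = t ∧
      ENNReal.ofReal (min ⟪a, νa⟫ (d / 4) ^ (1 - p)) ≤
        ENNReal.ofReal (suppFn P (gaussMap P x) ^ (1 - p)) := fun t ht => by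
    obtain ⟨x, hx, hxv, hmin⟩ := exists_frontier_min_le_suppFn_gaussMap hv hw hvw hP hPc h0
      ha hb hz hav hbv hab hνa (by positivity) ht.1 (ht.2.trans_le hzv)
    exact ⟨x, hx, hxv, ENNReal.ofReal_le_ofReal (Real.rpow_le_rpow hm hmin (by linarith))⟩
  have hbound := (mul_ofReal_sub_le_setLIntegral
    ((measurable_ofReal_suppFn_rpow hPc _).comp_aemeasurable
      (aemeasurable_gaussMap hP hPc.isClosed h0)) hv hlevel).trans_lt
    (lpSurfMeasure_univ_eq_setLIntegral hP hPc h0 p ▸ hlp)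
  rw [← ENNReal.ofReal_mul (by positivity), ENNReal.ofReal_lt_ofReal_iff (by positivity),
    show d / 2 - d / 4 = d / 4 by ring] at hbound
  rw [hνa.suppFn_eq hPc ha]
  exact le_mul_rpow_of_min_rpow_mul_lt hp hδ hδ1 hd (hνa.inner_pos h0) hbound

end Setup

/-- Lemma 3.2 of the paper. -/
theorem stmt_10 (p δ : ℝ) (hp : p ∈ Set.Ioo (0:ℝ) 1) (hδ : δ ∈ Set.Ioo (0:ℝ) (1/2)) :
    ∃ c₁ d₀ : ℝ, 0 < c₁ ∧ 0 < d₀ ∧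
      ∀ (P : Set (E 2)) (d : ℝ) (y z v w a b νa νb : E 2),
        Setup p δ P d y z v w a b νa νb → d₀ ≤ d →
        suppFn P νa ≤ c₁ * d ^ (-1 / (1 - p)) ∧
        suppFn P νb ≤ c₁ * d ^ (-1 / (1 - p)) := by
  obtain ⟨hδ0, hδ2⟩ := hδ
  have hδ1 : δ ≤ 1 := by linarith
  refine ⟨(4 / δ) ^ (1 / (1 - p)), 4 / δ, by positivity, by positivity,
    fun P d y z v w a b νa νb hS hd => ⟨?_, ?_⟩⟩
  · exact hS.suppFn_le hp.2 hδ0 hδ1 hd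
  · exact hS.swap.suppFn_le hp.2 hδ0 hδ1 hd

end
end

section
/- In the standing setup (see context), one has ⟨ν_P(a), w⟩ > 0, ⟨ν_P(b), −w⟩ > 0, and |⟨ν_P(a), v⟩| / ⟨ν_P(a), w⟩ ≤ ⟨a − z, w⟩ / (d/4) as well as |⟨ν_P(b), v⟩| / ⟨ν_P(b), −w⟩ ≤ ⟨b − z, −w⟩ / (d/4). -/
/-!
Write the normal at `a` as `ν = α v + β w`. The support inequalities `⟪z, ν⟫ ≤ ⟪a, ν⟫` and
`⟪y, ν⟫ ≤ ⟪a, ν⟫` compare `a` with two points on one line parallel to `v`, lying on opposite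
sides of the chord `{⟪·, v⟫ = d/4}` at distance at least `d/4` from it (`⟪z, v⟫ ≥ d/2`,
`⟪y, v⟫ ≤ 0`); whichever of them lies on the side of the sign of `α` gives
`|α| d/4 ≤ β ⟪a - z, w⟫`. The inequality against `b` gives `β ≥ 0`, and `β = 0` would force
`α = 0`, i.e. `ν = 0`. The statement at `b` is the same one with `a ↔ b` and `w ↦ -w`.
-/

open MeasureTheory Set
open scoped RealInnerProductSpace ENNReal NNReal Classical

noncomputable section

section

variable {F : Type*} [NormedAddCommGroup F] [InnerProductSpace ℝ F]

theorem inner_eq_add_of_orthonormal_pair (hF : Module.finrank ℝ F = 2) {v w : F}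
    (hv : ‖v‖ = 1) (hw : ‖w‖ = 1) (hvw : ⟪v, w⟫ = 0) (x y : F) :
    ⟪x, y⟫ = ⟪x, v⟫ * ⟪v, y⟫ + ⟪x, w⟫ * ⟪w, y⟫ := by
  have hon : Orthonormal ℝ ![v, w] := by
    refine ⟨Fin.forall_fin_two.2 ⟨hv, hw⟩, fun i j hij => ?_⟩
    fin_cases i <;> fin_cases j <;> simp_all [real_inner_comm]
  have : FiniteDimensional ℝ F := .of_finrank_pos (by omega)
  let b := (basisOfOrthonormalOfCardEqFinrank hon (by simp [hF])).toOrthonormalBasis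
    (by rwa [coe_basisOfOrthonormalOfCardEqFinrank])
  have hb : ⇑b = ![v, w] := by simp [b]
  simpa [Fin.sum_univ_two, hb] using (b.sum_inner_mul_inner x y).symm


theorem half_le_inner_and_inner_nonpos_of_norm_le {y z : F} {d : ℝ} (hd : 0 < d)
    (hzy : ‖z - y‖ = d) (hyz : ‖y‖ ≤ ‖z‖) (hzd : ‖z‖ ≤ d) :
    d / 2 ≤ ⟪z, d⁻¹ • (z - y)⟫ ∧ ⟪y, d⁻¹ • (z - y)⟫ ≤ 0 := by
  have hcos : ‖z‖ ^ 2 - 2 * ⟪z, y⟫ + ‖y‖ ^ 2 = d ^ 2 := by rw [← norm_sub_sq_real, hzy]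
  simp only [real_inner_smul_right, inner_sub_right, real_inner_self_eq_norm_sq,
    real_inner_comm z y]
  constructor
  · rw [← div_eq_inv_mul, le_div_iff₀ hd]
    nlinarith [norm_nonneg y]
  · exact mul_nonpos_of_nonneg_of_nonpos (inv_nonneg.2 hd.le) (by nlinarith [norm_nonneg z])

theorem inner_normal_pos_and_abs_div_le (hF : Module.finrank ℝ F = 2) {v w y z a b ν : F}
    {t : ℝ} (ht : 0 < t) (hv : ‖v‖ = 1) (hw : ‖w‖ = 1) (hvw : ⟪v, w⟫ = 0) (hν : ν ≠ 0)
    (hzv : 2 * t ≤ ⟪z, v⟫) (hyv : ⟪y, v⟫ ≤ 0) (hzyw : ⟪z, w⟫ = ⟪y, w⟫)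
    (hav : ⟪a, v⟫ = t) (hbv : ⟪b, v⟫ = t) (hab : 0 < ⟪a - b, w⟫)
    (hνz : ⟪z, ν⟫ ≤ ⟪a, ν⟫) (hνy : ⟪y, ν⟫ ≤ ⟪a, ν⟫) (hνb : ⟪b, ν⟫ ≤ ⟪a, ν⟫) :
    0 < ⟪ν, w⟫ ∧ |⟪ν, v⟫| / ⟪ν, w⟫ ≤ ⟪a - z, w⟫ / t := by
  have expand (x : F) : ⟪x, ν⟫ = ⟪ν, v⟫ * ⟪x, v⟫ + ⟪ν, w⟫ * ⟪x, w⟫ := by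
    rw [inner_eq_add_of_orthonormal_pair hF hv hw hvw, real_inner_comm ν v, real_inner_comm ν w]
    ring
  set α := ⟪ν, v⟫
  set β := ⟪ν, w⟫
  set s := ⟪a - z, w⟫
  have hs : s = ⟪a, w⟫ - ⟪z, w⟫ := inner_sub_left a z w
  have ha : ⟪a, ν⟫ = α * t + β * ⟪a, w⟫ := by rw [expand, hav]
  have hβ : 0 ≤ β := by
    refine nonneg_of_mul_nonneg_left ?_ hab
    rw [inner_sub_left]
    linear_combination hνb + ha - expand b - α * hbv
  have hz : α * (⟪z, v⟫ - t) ≤ β * s := by linear_combination hνz + ha - expand z - β * hs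
  have hy : α * (⟪y, v⟫ - t) ≤ β * s := by
    linear_combination hνy + ha - expand y - β * hs + β * hzyw
  have key : |α| * t ≤ β * s := by
    rcases abs_cases α with ⟨hα, hα0⟩ | ⟨hα, hα0⟩ <;> rw [hα] <;> nlinarith
  have hβpos : 0 < β := by
    refine hβ.lt_of_ne fun h0 => hν ?_
    have hα : α = 0 := by
      rw [← h0, zero_mul] at key
      exact abs_eq_zero.1 (le_antisymm (nonpos_of_mul_nonpos_left key ht) (abs_nonneg α))
    have := expand ν
    rw [hα, ← h0] at this
    simpa using this
  exact ⟨hβpos, (div_le_div_iff₀ hβpos ht).2 (by linarith)⟩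

end

theorem stmt_11_general (p δ : ℝ)
    (P : Set (E 2)) (d : ℝ) (y z v w a b νa νb : E 2)
    (hs : Setup p δ P d y z v w a b νa νb) :
    0 < ⟪νa, w⟫ ∧ 0 < ⟪νb, -w⟫ ∧
    |⟪νa, v⟫| / ⟪νa, w⟫ ≤ ⟪a - z, w⟫ / (d/4) ∧
    |⟪νb, v⟫| / ⟪νb, -w⟫ ≤ ⟪b - z, -w⟫ / (d/4) := by
  obtain ⟨-, hcomp, h0, -, rfl, hyP, hzP, hzy, hyz, rfl, hw, hvw, haF, hbF, hab, hav, hbv,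
    hνa, hνb⟩ := hs
  have haP : a ∈ P := hcomp.isClosed.frontier_subset haF
  have hbP : b ∈ P := hcomp.isClosed.frontier_subset hbF
  have hd : 0 < Metric.diam P :=
    Metric.diam_pos ⟨a, haP, b, hbP, fun h => by simp [h] at hab⟩ hcomp.isBounded
  have hzd : ‖z‖ ≤ Metric.diam P := by
    simpa using Metric.dist_le_diam_of_mem hcomp.isBounded hzP (interior_subset h0)
  obtain ⟨hzv, hyv⟩ := half_le_inner_and_inner_nonpos_of_norm_le hd hzy hyz hzd
  have hv : ‖(Metric.diam P)⁻¹ • (z - y)‖ = 1 := by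
    rw [norm_smul, hzy, norm_inv, Real.norm_of_nonneg hd.le, inv_mul_cancel₀ hd.ne']
  have hzyw : ⟪z, w⟫ = ⟪y, w⟫ := by
    rw [real_inner_smul_left, inner_sub_left, mul_eq_zero] at hvw
    exact sub_eq_zero.1 (hvw.resolve_left (inv_ne_zero hd.ne'))
  have hF : Module.finrank ℝ (E 2) = 2 := finrank_euclideanSpace_fin
  obtain ⟨ha₁, ha₂⟩ := inner_normal_pos_and_abs_div_le hF (by positivity) hv hw hvw
    (norm_ne_zero_iff.1 (hνa.1 ▸ one_ne_zero)) (by linarith) hyv hzyw hav hbv hab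
    (hνa.2 z hzP) (hνa.2 y hyP) (hνa.2 b hbP)
  obtain ⟨hb₁, hb₂⟩ := inner_normal_pos_and_abs_div_le hF (by positivity) hv (norm_neg w ▸ hw)
    (by rw [inner_neg_right, hvw, neg_zero]) (norm_ne_zero_iff.1 (hνb.1 ▸ one_ne_zero))
    (by linarith) hyv (by rw [inner_neg_right, inner_neg_right, hzyw]) hbv hav
    (by rwa [inner_neg_right, ← inner_neg_left, neg_sub])
    (hνb.2 z hzP) (hνb.2 y hyP) (hνb.2 a haP)
  exact ⟨ha₁, hb₁, ha₂, hb₂⟩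

/-- Lemma 3.3 of the paper. -/
theorem stmt_11 (p δ : ℝ) (hp : p ∈ Set.Ioo (0:ℝ) 1) (hδ : δ ∈ Set.Ioo (0:ℝ) (1/2))
    (P : Set (E 2)) (d : ℝ) (y z v w a b νa νb : E 2)
    (hs : Setup p δ P d y z v w a b νa νb) :
    0 < ⟪νa, w⟫ ∧ 0 < ⟪νb, -w⟫ ∧
    |⟪νa, v⟫| / ⟪νa, w⟫ ≤ ⟪a - z, w⟫ / (d/4) ∧
    |⟪νb, v⟫| / ⟪νb, -w⟫ ≤ ⟪b - z, -w⟫ / (d/4) :=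
  stmt_11_general p δ P d y z v w a b νa νb hs
end
end

section
/- In the standing setup (see context), one has ⟨ν_P(a), w⟩ ≥ 1/5 and ⟨ν_P(b), −w⟩ ≥ 1/5. -/
open MeasureTheory Set
open scoped RealInnerProductSpace ENNReal NNReal Classical

noncomputable section

lemma my_coords {v w : E 2} (hv : ‖v‖ = 1) (hw : ‖w‖ = 1) (hvw : ⟪v, w⟫ = 0)
    (x : E 2) : x = ⟪x, v⟫ • v + ⟪x, w⟫ • w := by
  have hon : Orthonormal ℝ ![v, w] := by
    constructor
    · intro i; fin_cases i <;> simpa using (by assumption : _)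
    · intro i j hij
      fin_cases i <;> fin_cases j <;> simp_all [real_inner_comm w v]
  have hli := hon.linearIndependent
  have hrange : Set.range ![v, w] = {v, w} := by
    ext u; simp [Fin.exists_fin_two, or_comm]
  have hsp : Submodule.span ℝ ({v, w} : Set (E 2)) = ⊤ := by
    rw [← hrange]
    apply Submodule.eq_top_of_finrank_eq
    rw [finrank_span_eq_card hli]
    simp
  have hx : x ∈ Submodule.span ℝ ({v, w} : Set (E 2)) := hsp ▸ Submodule.mem_top
  obtain ⟨c1, c2, hc⟩ := Submodule.mem_span_pair.mp hx
  have hv2 : ⟪v, v⟫ = 1 := by rw [real_inner_self_eq_norm_sq, hv]; norm_num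
  have hw2 : ⟪w, w⟫ = 1 := by rw [real_inner_self_eq_norm_sq, hw]; norm_num
  have hwv : ⟪w, v⟫ = 0 := by rw [real_inner_comm]; exact hvw
  have h1 : ⟪x, v⟫ = c1 := by
    rw [← hc, inner_add_left, real_inner_smul_left, real_inner_smul_left, hv2, hwv]; ring
  have h2 : ⟪x, w⟫ = c2 := by
    rw [← hc, inner_add_left, real_inner_smul_left, real_inner_smul_left, hw2, hvw]; ring
  rw [h1, h2, hc]

lemma my_parseval {v w : E 2} (hv : ‖v‖ = 1) (hw : ‖w‖ = 1) (hvw : ⟪v, w⟫ = 0)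
    (x u : E 2) : ⟪x, u⟫ = ⟪x, v⟫ * ⟪u, v⟫ + ⟪x, w⟫ * ⟪u, w⟫ := by
  have hv2 : ⟪v, v⟫ = 1 := by rw [real_inner_self_eq_norm_sq, hv]; norm_num
  have hw2 : ⟪w, w⟫ = 1 := by rw [real_inner_self_eq_norm_sq, hw]; norm_num
  have hwv : ⟪w, v⟫ = 0 := by rw [real_inner_comm]; exact hvw
  conv_lhs => rw [my_coords hv hw hvw x]
  rw [inner_add_left, real_inner_smul_left, real_inner_smul_left,
    real_inner_comm v u, real_inner_comm w u]



set_option maxHeartbeats 1000000 in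
lemma my_core {P : Set (E 2)} {d : ℝ} {v w z a x0 ν : E 2}
    (hd : 0 < d) (hv : ‖v‖ = 1) (hw : ‖w‖ = 1) (hvw : ⟪v, w⟫ = 0)
    (hz : z ∈ P) (hzv1 : d/2 ≤ ⟪z, v⟫) (hzv2 : ⟪z, v⟫ ≤ d)
    (hy : z - d • v ∈ P)
    (hav : ⟪a, v⟫ = d/4) (haz : ⟪a, w⟫ - ⟪z, w⟫ ≤ d)
    (hx0 : x0 ∈ interior P) (hx0v : ⟪x0, v⟫ = d/4) (hx0w : ⟪x0, w⟫ < ⟪a, w⟫)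
    (hν : IsOuterNormalAt P ν a) : 1/5 ≤ ⟪ν, w⟫ := by
  obtain ⟨hν1, hν2⟩ := hν
  have par := my_parseval hv hw hvw
  set s := ⟪ν, v⟫ with hs_def
  set t := ⟪ν, w⟫ with ht_def
  have hνν : ⟪ν, ν⟫ = 1 := by rw [real_inner_self_eq_norm_sq, hν1]; norm_num
  have hst : s * s + t * t = 1 := by rw [← par ν ν]; exact hνν
  -- strict inequality from interior point
  obtain ⟨ε, hε, hball⟩ : ∃ ε > 0, Metric.ball x0 ε ⊆ P := by
    rw [mem_interior_iff_mem_nhds] at hx0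
    exact Metric.mem_nhds_iff.mp hx0
  have hq : x0 + (ε/2) • ν ∈ P := by
    apply hball
    rw [Metric.mem_ball, dist_eq_norm]
    have : x0 + (ε/2) • ν - x0 = (ε/2) • ν := by abel
    rw [this, norm_smul, hν1, Real.norm_eq_abs, abs_of_pos (half_pos hε)]
    linarith
  have h1 := hν2 _ hq
  rw [inner_add_left, real_inner_smul_left, hνν] at h1
  have hx0a : ⟪x0, ν⟫ < ⟪a, ν⟫ := by nlinarith
  rw [par x0 ν, par a ν, hx0v, hav] at hx0a
  have ht : 0 < t := by nlinarith
  have h2 := hν2 z hz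
  rw [par z ν, par a ν, hav] at h2
  have h3 := hν2 _ hy
  rw [par _ ν, par a ν, hav, inner_sub_left, inner_sub_left, real_inner_smul_left,
    real_inner_smul_left, hvw] at h3
  have hvv : ⟪v, v⟫ = 1 := by rw [real_inner_self_eq_norm_sq, hv]; norm_num
  rw [hvv] at h3
  -- h3 : (⟪z,v⟫ - d*1) * s + (⟪z,w⟫ - d*0) * t ≤ d/4 * s + ⟪a,w⟫ * t
  have hs_le : s ≤ 4 * t := by
    rcases le_or_gt s 0 with h | h
    · linarith
    · nlinarith
  have hns_le : -s ≤ 4 * t := by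
    rcases le_or_gt 0 s with h | h
    · linarith
    · nlinarith
  nlinarith [mul_nonneg (by linarith : (0:ℝ) ≤ 4*t - s) (by linarith : (0:ℝ) ≤ 4*t + s), mul_pos ht ht]


lemma my_between {P : Set (E 2)} {d : ℝ} {v w x0 q r : E 2}
    (hconv : Convex ℝ P) (hx0_int : x0 ∈ interior P)
    (hv1 : ‖v‖ = 1) (hw1 : ‖w‖ = 1) (hvw : ⟪v, w⟫ = 0)
    (hqF : q ∈ frontier P) (hrP : r ∈ P)
    (hqv : ⟪q, v⟫ = d/4) (hrv : ⟪r, v⟫ = d/4) (hx0v : ⟪x0, v⟫ = d/4)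
    (hrq : ⟪r, w⟫ < ⟪q, w⟫) : ⟪x0, w⟫ < ⟪q, w⟫ := by
  have hcoords := my_coords hv1 hw1 hvw
  by_contra hcon
  push_neg at hcon
  have hne : (0:ℝ) < ⟪x0, w⟫ - ⟪r, w⟫ := by linarith
  set μ : ℝ := (⟪x0, w⟫ - ⟪q, w⟫) / (⟪x0, w⟫ - ⟪r, w⟫) with hμ_def
  have hμ0 : 0 ≤ μ := div_nonneg (by linarith) hne.le
  have h1μ : 0 < 1 - μ := by
    have : μ < 1 := by rw [hμ_def, div_lt_one hne]; linarith
    linarith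
  have hcoef : (1 - μ) * ⟪x0, w⟫ + μ * ⟪r, w⟫ = ⟪q, w⟫ := by
    set A := ⟪x0, w⟫ with hA
    set B := ⟪r, w⟫ with hB
    set C := ⟪q, w⟫ with hC
    rw [hμ_def]
    field_simp
    ring
  have key : q = (1 - μ) • x0 + μ • r := by
    conv_lhs => rw [hcoords q]
    conv_rhs => rw [hcoords x0, hcoords r]
    rw [hqv, hrv, hx0v, ← hcoef]
    module
  have : q ∈ interior P := by
    rw [key]
    exact hconv.combo_interior_closure_mem_interior hx0_int (subset_closure hrP)
      h1μ hμ0 (by ring)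
  exact hqF.2 this


set_option maxHeartbeats 1000000 in
/-- the Corollary after Lemma 3.3 of the paper. -/
theorem stmt_12 (p δ : ℝ) (hp : p ∈ Set.Ioo (0:ℝ) 1) (hδ : δ ∈ Set.Ioo (0:ℝ) (1/2))
    (P : Set (E 2)) (d : ℝ) (y z v w a b νa νb : E 2)
    (hs : Setup p δ P d y z v w a b νa νb) :
    1/5 ≤ ⟪νa, w⟫ ∧ 1/5 ≤ ⟪νb, -w⟫ := by
  obtain ⟨hconv, hcomp, h0, hlp, hdiam, hyP, hzP, hzy, hyz, hv, hw1, hvw, haF, hbF, hab,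
    hav, hbv, hνa, hνb⟩ := hs
  have hPcl : IsClosed P := hcomp.isClosed
  have hbd : Bornology.IsBounded P := hcomp.isBounded
  have haP : a ∈ P := hPcl.frontier_subset haF
  have hbP : b ∈ P := hPcl.frontier_subset hbF
  -- d > 0
  obtain ⟨ε, hε, hball⟩ : ∃ ε > 0, Metric.ball (0:E 2) ε ⊆ P := by
    rw [mem_interior_iff_mem_nhds] at h0
    exact Metric.mem_nhds_iff.mp h0
  have hd : 0 < d := by
    have h1 : (ε/2) • w ∈ P := by
      apply hball
      rw [Metric.mem_ball, dist_zero_right, norm_smul, hw1, Real.norm_eq_abs,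
        abs_of_pos (half_pos hε)]
      linarith
    have h2 : -((ε/2) • w) ∈ P := by
      apply hball
      rw [Metric.mem_ball, dist_zero_right, norm_neg, norm_smul, hw1, Real.norm_eq_abs,
        abs_of_pos (half_pos hε)]
      linarith
    have := Metric.dist_le_diam_of_mem hbd h1 h2
    rw [dist_eq_norm] at this
    have he : (ε/2) • w - -((ε/2) • w) = ε • w := by module
    rw [he, norm_smul, hw1, Real.norm_eq_abs, abs_of_pos hε] at this
    simp only [mul_one] at this
    linarith [hdiam ▸ this]
  have hd0 : d ≠ 0 := ne_of_gt hd
  have hv1 : ‖v‖ = 1 := by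
    rw [hv, norm_smul, hzy, Real.norm_eq_abs, abs_of_pos (inv_pos.mpr hd)]
    field_simp
  have hzyv : z - y = d • v := by
    rw [hv, smul_smul, mul_inv_cancel₀ hd0, one_smul]
  have hy_eq : y = z - d • v := by rw [← hzyv]; abel
  have hvv : ⟪v, v⟫ = 1 := by rw [real_inner_self_eq_norm_sq, hv1]; norm_num
  -- d/2 ≤ ⟪z,v⟫ ≤ d
  have hzv1 : d/2 ≤ ⟪z, v⟫ := by
    have h := hyz
    rw [hy_eq] at h
    have hsq : ‖z - d • v‖^2 = ‖z‖^2 - 2 * ⟪z, d • v⟫ + ‖d • v‖^2 := norm_sub_sq_real z (d • v)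
    rw [real_inner_smul_right, norm_smul, hv1, Real.norm_eq_abs, abs_of_pos hd] at hsq
    nlinarith [norm_nonneg z, norm_nonneg (z - d • v), sq_nonneg (‖z‖ - ‖z - d•v‖)]
  have hz0 : ‖z‖ ≤ d := by
    have := Metric.dist_le_diam_of_mem hbd hzP (interior_subset h0)
    rw [dist_zero_right] at this
    linarith [hdiam ▸ this]
  have hzv2 : ⟪z, v⟫ ≤ d := by
    have := real_inner_le_norm z v
    rw [hv1, mul_one] at this
    linarith
  have hzv_pos : 0 < ⟪z, v⟫ := by linarith
  have hyP' : z - d • v ∈ P := hy_eq ▸ hyP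
  -- diam bounds in w direction
  have haz : ⟪a, w⟫ - ⟪z, w⟫ ≤ d := by
    have h := real_inner_le_norm (a - z) w
    rw [hw1, mul_one, inner_sub_left] at h
    have := Metric.dist_le_diam_of_mem hbd haP hzP
    rw [dist_eq_norm] at this
    linarith [hdiam ▸ this]
  have hbz : ⟪z, w⟫ - ⟪b, w⟫ ≤ d := by
    have h := real_inner_le_norm (z - b) w
    rw [hw1, mul_one, inner_sub_left] at h
    have := Metric.dist_le_diam_of_mem hbd hzP hbP
    rw [dist_eq_norm] at this
    linarith [hdiam ▸ this]
  -- the interior point x0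
  set lam : ℝ := (d/4) / ⟪z, v⟫ with hlam_def
  have hlam0 : 0 < lam := div_pos (by linarith) hzv_pos
  have hlam1 : lam < 1 := by
    rw [div_lt_one hzv_pos]; linarith
  set x0 : E 2 := lam • z with hx0_def
  have hx0_int : x0 ∈ interior P := by
    have := hconv.combo_interior_closure_mem_interior h0 (subset_closure hzP)
      (by linarith : (0:ℝ) < 1 - lam) hlam0.le (by ring)
    rwa [smul_zero, zero_add] at this
  have hx0v : ⟪x0, v⟫ = d/4 := by
    rw [hx0_def, real_inner_smul_left, hlam_def, div_mul_cancel₀ _ (ne_of_gt hzv_pos)]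
  have hβα : ⟪b, w⟫ < ⟪a, w⟫ := by
    rw [inner_sub_left] at hab; linarith
  have hγα : ⟪x0, w⟫ < ⟪a, w⟫ := my_between hconv hx0_int hv1 hw1 hvw haF hbP hav hbv hx0v hβα
  have hnw : ‖-w‖ = 1 := by rw [norm_neg]; exact hw1
  have hvnw : ⟪v, -w⟫ = 0 := by rw [inner_neg_right, hvw, neg_zero]
  have hβγ : ⟪b, w⟫ < ⟪x0, w⟫ := by
    have h := my_between hconv hx0_int hv1 hnw hvnw hbF haP hbv hav hx0v
      (by rw [inner_neg_right, inner_neg_right]; linarith)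
    rw [inner_neg_right, inner_neg_right] at h
    linarith
  constructor
  · exact my_core hd hv1 hw1 hvw hzP hzv1 hzv2 hyP' hav haz hx0_int hx0v hγα hνa
  · have haz' : ⟪b, -w⟫ - ⟪z, -w⟫ ≤ d := by
      rw [inner_neg_right, inner_neg_right]; linarith
    have hx0w' : ⟪x0, -w⟫ < ⟪b, -w⟫ := by
      rw [inner_neg_right, inner_neg_right]; linarith
    exact my_core hd hv1 hnw hvnw hzP hzv1 hzv2 hyP' hbv haz' hx0_int hx0v hx0w' hνb
end
end
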